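/- Let F ⊆ ℝ^d be the attractor of an autonomous iterated function system of contracting similarities {f_i}_{i∈I} with I finite, i.e. the unique nonempty compact set F with F = ⋃_{i∈I} f_i(F). If the system satisfies the Moran open-set condition — there exists a nonempty bounded open set U with F ⊆ closure(U), f_i(U) ⊆ U for all i ∈ I, and f_i(U) ∩ f_j(U) = ∅ for i ≠ j — then F is equi-homogeneous. -/

import Mathlib

open Set Metric Filter Bornology MeasureTheory
open scoped ENNReal NNReal

/-!
Cut the coding tree of `F` at the words `w` whose contraction ratio `σ_w` first drops to
`t ≍ δ` or below. The pieces `f_w(F)` cover `F`, each is a copy of `F` scaled by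
`σ_w ∈ (σ_min t, t]`, and by the open-set condition the sets `f_w(U)` are disjoint and contain
balls of radius `≍ t`, so a volume count shows that a ball of radius `δ` meets boundedly many
pieces. Hence `N(B_δ(y) ∩ F, ρ) ≲ N(F, ρ / 2δ)` for every `y`, while every `B_{c₁δ}(x) ∩ F`
contains a whole piece, whence `N(F, ρ / 2δ) ≤ N(B_{c₁δ}(x) ∩ F, c₂ρ)`.
-/

/-- `coverNumber F δ` : the minimum number of closed `δ`-balls with centres in
`F` needed to cover `F` (`∞` if there is no finite such cover). -/
noncomputable def coverNumber {X : Type*} [MetricSpace X] (F : Set X) (δ : ℝ) : ℝ≥0∞ :=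
  ⨅ (t : Finset X) (_ : (t : Set X) ⊆ F) (_ : F ⊆ ⋃ x ∈ t, closedBall x δ),
    (t.card : ℝ≥0∞)

/-- `F` is equi-homogeneous: for every `δ₀ > 0` there are `M ≥ 1` and
`c₁, c₂ > 0` with
`sup_{x∈F} N(B_δ(x) ∩ F, ρ) ≤ M inf_{x∈F} N(B_{c₁δ}(x) ∩ F, c₂ρ)`
for all `0 < ρ < δ ≤ δ₀`. -/
def EquiHomogeneous {X : Type*} [MetricSpace X] (F : Set X) : Prop :=
  ∀ δ₀ : ℝ, 0 < δ₀ → ∃ M c₁ c₂ : ℝ, 1 ≤ M ∧ 0 < c₁ ∧ 0 < c₂ ∧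
    ∀ δ ρ : ℝ, 0 < ρ → ρ < δ → δ ≤ δ₀ →
      (⨆ x ∈ F, coverNumber (closedBall x δ ∩ F) ρ) ≤
        ENNReal.ofReal M * (⨅ x ∈ F, coverNumber (closedBall x (c₁ * δ) ∩ F) (c₂ * ρ))

open Function Module

section CoverNumber

variable {X Y : Type*} [MetricSpace X] [MetricSpace Y]

theorem coverNumber_le_card {A : Set X} {ε : ℝ} {t : Finset X} (htA : (t : Set X) ⊆ A)
    (hcov : A ⊆ ⋃ x ∈ t, closedBall x ε) : coverNumber A ε ≤ t.card :=
  iInf₂_le_of_le t htA (iInf_le _ hcov)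

theorem le_coverNumber {A : Set X} {ε : ℝ} {n : ℝ≥0∞}
    (h : ∀ t : Finset X, (t : Set X) ⊆ A → A ⊆ ⋃ x ∈ t, closedBall x ε → n ≤ t.card) :
    n ≤ coverNumber A ε :=
  le_iInf₂ fun t htA => le_iInf (h t htA)

theorem coverNumber_antitone (A : Set X) : Antitone (coverNumber A) :=
  fun _ _ hε => le_coverNumber fun _ htA hcov => coverNumber_le_card htA
    (hcov.trans (iUnion₂_mono fun _ _ => closedBall_subset_closedBall hε))

theorem TotallyBounded.exists_card_eq_coverNumber {A : Set X} (hA : TotallyBounded A) {ε : ℝ}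
    (hε : 0 < ε) : ∃ t : Finset X, (t : Set X) ⊆ A ∧ (A ⊆ ⋃ x ∈ t, closedBall x ε) ∧
      (t.card : ℝ≥0∞) = coverNumber A ε := by
  have hcovers : ∃ n, ∃ t : Finset X, (t : Set X) ⊆ A ∧ (A ⊆ ⋃ x ∈ t, closedBall x ε) ∧
      t.card = n := by
    obtain ⟨s, hsA, hs, hcov⟩ := finite_approx_of_totallyBounded hA ε hε
    refine ⟨_, hs.toFinset, by simpa using hsA, fun x hx => ?_, rfl⟩
    obtain ⟨y, hy, hxy⟩ := mem_iUnion₂.1 (hcov hx)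
    exact mem_iUnion₂.2 ⟨y, by simpa using hy, ball_subset_closedBall hxy⟩
  obtain ⟨t, htA, hcov, hcard⟩ := Nat.sInf_mem hcovers
  refine ⟨t, htA, hcov, le_antisymm ?_ (coverNumber_le_card htA hcov)⟩
  refine le_coverNumber fun s hsA hscov => ?_
  have hle : t.card ≤ s.card := hcard ▸ Nat.sInf_le ⟨s, hsA, hscov, rfl⟩
  exact_mod_cast hle

theorem coverNumber_le_card_of_subset_biUnion {κ : Type*} {A : Set X} {ε : ℝ} (t : Finset κ)
    (C : κ → Set X) (hA : A ⊆ ⋃ i ∈ t, C i)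
    (hC : ∀ i ∈ t, ∀ a ∈ C i, ∀ b ∈ C i, dist a b ≤ ε) : coverNumber A ε ≤ t.card := by
  classical
  rcases A.eq_empty_or_nonempty with rfl | ⟨x₀, -⟩
  · exact (coverNumber_le_card (t := ∅) (by simp) (empty_subset _)).trans (by simp)
  have : Nonempty X := ⟨x₀⟩
  let pick : κ → X := fun i => Classical.epsilon (· ∈ C i ∩ A)
  have hpick : ∀ i, (C i ∩ A).Nonempty → pick i ∈ C i ∩ A := fun i h => Classical.epsilon_spec h
  let t' := (t.filter fun i => (C i ∩ A).Nonempty).image pick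
  have ht'A : (t' : Set X) ⊆ A := by
    intro x hx
    obtain ⟨i, hi, rfl⟩ := Finset.mem_image.1 hx
    exact (hpick i (Finset.mem_filter.1 hi).2).2
  have hcov : A ⊆ ⋃ x ∈ t', closedBall x ε := by
    intro a ha
    obtain ⟨i, hi, hai⟩ := mem_iUnion₂.1 (hA ha)
    have hne : (C i ∩ A).Nonempty := ⟨a, hai, ha⟩
    exact mem_iUnion₂.2 ⟨pick i, Finset.mem_image_of_mem _ (Finset.mem_filter.2 ⟨hi, hne⟩),
      hC i hi a hai _ (hpick i hne).1⟩
  refine (coverNumber_le_card ht'A hcov).trans ?_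
  exact_mod_cast Finset.card_image_le.trans (Finset.card_filter_le _ _)

theorem coverNumber_le_of_mapsTo {g : X → Y} {r ε : ℝ} (hr : 0 < r)
    (hg : ∀ a b, r * dist a b ≤ dist (g a) (g b)) {A : Set X} {B : Set Y} (hAB : MapsTo g A B) :
    coverNumber A (2 * ε / r) ≤ coverNumber B ε := by
  refine le_coverNumber fun t _ hcov => ?_
  refine coverNumber_le_card_of_subset_biUnion t (fun z => g ⁻¹' closedBall z ε)
    (fun a ha => by simpa using hcov (hAB ha)) fun z _ a ha b hb => ?_
  rw [le_div_iff₀ hr, mul_comm]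
  calc r * dist a b ≤ dist (g a) (g b) := hg a b
    _ ≤ dist (g a) z + dist (g b) z := dist_triangle_right _ _ _
    _ ≤ 2 * ε := by rw [two_mul]; exact add_le_add ha hb

theorem coverNumber_le_card_mul_of_subset_biUnion_image {κ : Type*} {F : Set X} {A : Set Y}
    (hF : TotallyBounded F) {L ε : ℝ} (hL : 0 ≤ L) (hε : 0 < ε) (S : Finset κ)
    (g : κ → X → Y) (hg : ∀ w ∈ S, ∀ a b, dist (g w a) (g w b) ≤ L * dist a b)
    (hA : A ⊆ ⋃ w ∈ S, g w '' F) : coverNumber A (2 * (L * ε)) ≤ S.card * coverNumber F ε := by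
  obtain ⟨t, -, htcov, htcard⟩ := hF.exists_card_eq_coverNumber hε
  rw [← htcard, ← Nat.cast_mul, ← Finset.card_product]
  refine coverNumber_le_card_of_subset_biUnion (S ×ˢ t) (fun p => closedBall (g p.1 p.2) (L * ε))
    ?_ fun p _ a ha b hb => ?_
  · intro a ha
    obtain ⟨w, hw, q, hq, rfl⟩ := mem_iUnion₂.1 (hA ha)
    obtain ⟨z, hz, hqz⟩ := mem_iUnion₂.1 (htcov hq)
    refine mem_iUnion₂.2 ⟨(w, z), Finset.mem_product.2 ⟨hw, hz⟩, ?_⟩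
    exact (hg w hw q z).trans (mul_le_mul_of_nonneg_left hqz hL)
  · calc dist a b ≤ dist a (g p.1 p.2) + dist b (g p.1 p.2) := dist_triangle_right _ _ _
      _ ≤ 2 * (L * ε) := by rw [two_mul]; exact add_le_add ha hb

end CoverNumber

section Similarity

variable {X Y : Type*} [MetricSpace X] [MetricSpace Y]

theorem injective_of_dist_eq_mul {g : X → Y} {c : ℝ} (hc : 0 < c)
    (hg : ∀ x y, dist (g x) (g y) = c * dist x y) : Injective g := fun a b hab => by
  have h := hg a b
  rw [hab, dist_self] at h
  exact dist_eq_zero.1 ((mul_eq_zero.1 h.symm).resolve_left hc.ne')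

theorem ball_mul_subset_image_ball {g : X → Y} {c : ℝ} (hc : 0 < c)
    (hg : ∀ x y, dist (g x) (g y) = c * dist x y) (hsurj : Surjective g) (x : X) (r : ℝ) :
    ball (g x) (c * r) ⊆ g '' ball x r := by
  intro z hz
  obtain ⟨u, rfl⟩ := hsurj z
  rw [mem_ball, hg] at hz
  exact ⟨u, mem_ball.2 (lt_of_mul_lt_mul_left hz hc.le), rfl⟩

/-- After rescaling, `g` is an isometry, hence affine (strict convexity), hence onto
(finite dimension). -/
theorem surjective_of_dist_eq_mul {E : Type*} [NormedAddCommGroup E] [NormedSpace ℝ E]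
    [StrictConvexSpace ℝ E] [FiniteDimensional ℝ E] {g : E → E} {c : ℝ} (hc : 0 < c)
    (hg : ∀ x y, dist (g x) (g y) = c * dist x y) : Surjective g := by
  have hiso : Isometry fun x => c⁻¹ • g x := Isometry.of_dist_eq fun x y => by
    rw [dist_smul₀, hg, Real.norm_of_nonneg (inv_nonneg.2 hc.le), inv_mul_cancel_left₀ hc.ne']
  have : Inhabited E := ⟨0⟩
  intro z
  obtain ⟨x, hx⟩ := (hiso.affineIsometryOfStrictConvexSpace.toAffineIsometryEquiv rfl).surjective
    (c⁻¹ • z)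
  refine ⟨x, ?_⟩
  simpa [hc.ne'] using hx

end Similarity

theorem card_le_of_pairwiseDisjoint_ball_subset_closedBall {E κ : Type*} [NormedAddCommGroup E]
    [NormedSpace ℝ E] [FiniteDimensional ℝ E] {T : Finset κ} {c : κ → E} {r R : ℝ} {y : E}
    (hr : 0 < r) (hdisj : (T : Set κ).PairwiseDisjoint fun i => ball (c i) r)
    (hsub : ∀ i ∈ T, ball (c i) r ⊆ closedBall y R) :
    (T.card : ℝ≥0∞) ≤ ENNReal.ofReal ((R / r) ^ finrank ℝ E) := by
  borelize E
  let μ : Measure E := Measure.addHaar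
  rcases T.eq_empty_or_nonempty with rfl | ⟨i, hi⟩
  · simp
  have hR : 0 ≤ R := dist_nonneg.trans (mem_closedBall.1 (hsub i hi (mem_ball_self hr)))
  have hr' : 0 < r ^ finrank ℝ E := pow_pos hr _
  have hvol : T.card * ENNReal.ofReal (r ^ finrank ℝ E) * μ (ball 0 1) ≤
      ENNReal.ofReal (R ^ finrank ℝ E) * μ (ball 0 1) :=
    calc T.card * ENNReal.ofReal (r ^ finrank ℝ E) * μ (ball 0 1)
        = ∑ i ∈ T, μ (ball (c i) r) := by
          simp [Measure.addHaar_ball_of_pos μ _ hr, mul_assoc]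
      _ = μ (⋃ i ∈ T, ball (c i) r) :=
          (measure_biUnion_finset hdisj fun _ _ => measurableSet_ball).symm
      _ ≤ μ (closedBall y R) := measure_mono (iUnion₂_subset hsub)
      _ = ENNReal.ofReal (R ^ finrank ℝ E) * μ (ball 0 1) := Measure.addHaar_closedBall μ y hR
  rw [ENNReal.mul_le_mul_iff_left (measure_ball_pos μ 0 one_pos).ne' measure_ball_lt_top.ne,
    ← ENNReal.le_div_iff_mul_le (Or.inl (ENNReal.ofReal_pos.2 hr').ne')
      (Or.inl ENNReal.ofReal_ne_top), ← ENNReal.ofReal_div_of_pos hr'] at hvol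
  rwa [div_pow]

section Words

variable {ι α : Type*}

def wordMap (f : ι → α → α) (w : List ι) : α → α := w.foldr (fun i g => f i ∘ g) id

@[simp] theorem wordMap_nil (f : ι → α → α) : wordMap f [] = id := rfl

@[simp] theorem wordMap_cons (f : ι → α → α) (i : ι) (w : List ι) :
    wordMap f (i :: w) = f i ∘ wordMap f w := rfl

theorem mapsTo_wordMap {f : ι → α → α} {A : Set α} (h : ∀ i, MapsTo (f i) A A) :
    ∀ w, MapsTo (wordMap f w) A A
  | [] => mapsTo_id A
  | i :: w => (h i).comp (mapsTo_wordMap h w)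

def wordRatio (σ : ι → ℝ) (w : List ι) : ℝ := (w.map σ).prod

@[simp] theorem wordRatio_nil (σ : ι → ℝ) : wordRatio σ [] = 1 := rfl

@[simp] theorem wordRatio_cons (σ : ι → ℝ) (i : ι) (w : List ι) :
    wordRatio σ (i :: w) = σ i * wordRatio σ w := by
  simp [wordRatio]

theorem wordRatio_append (σ : ι → ℝ) (u v : List ι) :
    wordRatio σ (u ++ v) = wordRatio σ u * wordRatio σ v := by
  simp [wordRatio]

theorem wordRatio_pos {σ : ι → ℝ} (hσ : ∀ i, 0 < σ i) (w : List ι) : 0 < wordRatio σ w :=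
  List.prod_pos fun _ hx => by
    obtain ⟨i, -, rfl⟩ := List.mem_map.1 hx
    exact hσ i

theorem wordRatio_le_pow_length {σ : ι → ℝ} {s : ℝ} (hσ : ∀ i, 0 < σ i) (hs : ∀ i, σ i ≤ s)
    (w : List ι) : wordRatio σ w ≤ s ^ w.length := by
  induction w with
  | nil => simp
  | cons i w ih =>
    rw [wordRatio_cons, List.length_cons, pow_succ']
    exact mul_le_mul (hs i) ih (wordRatio_pos hσ w).le ((hσ i).le.trans (hs i))

/-- The Moran cut of the coding tree at scale `t`. -/
def stoppingWords (σ : ι → ℝ) (t : ℝ) : Set (List ι) :=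
  {w | wordRatio σ w ≤ t ∧ ∀ u, u <+: w → u ≠ w → t < wordRatio σ u}

variable {σ : ι → ℝ} {t : ℝ}

theorem nil_mem_stoppingWords (ht : 1 ≤ t) : [] ∈ stoppingWords σ t :=
  ⟨by simpa using ht, fun _ hu hne => absurd (List.prefix_nil.1 hu) hne⟩

theorem cons_mem_stoppingWords {i : ι} {w : List ι} (hσi : 0 < σ i) (ht1 : t < 1)
    (hw : w ∈ stoppingWords σ (t / σ i)) : i :: w ∈ stoppingWords σ t := by
  refine ⟨?_, fun u hu hne => ?_⟩
  · simpa [le_div_iff₀' hσi] using hw.1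
  obtain rfl | ⟨u, rfl, hu'⟩ := List.prefix_cons_iff.1 hu
  · simpa using ht1
  · have := hw.2 u hu' fun h => hne (h ▸ rfl)
    simpa [div_lt_iff₀' hσi] using this

theorem not_prefix_of_mem_stoppingWords {w w' : List ι} (hw : w ∈ stoppingWords σ t)
    (hw' : w' ∈ stoppingWords σ t) (hne : w ≠ w') : ¬ w <+: w' :=
  fun h => (hw'.2 w h hne).not_ge hw.1

theorem mul_lt_wordRatio_of_mem_stoppingWords {c : ℝ} (hc : ∀ i, c ≤ σ i) (hc0 : 0 < c)
    (ht0 : 0 ≤ t) (ht1 : t < 1) {w : List ι} (hw : w ∈ stoppingWords σ t) :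
    c * t < wordRatio σ w := by
  have hne : w ≠ [] := by
    rintro rfl
    exact ht1.not_ge (by simpa using hw.1)
  have hlast : wordRatio σ w = wordRatio σ w.dropLast * σ (w.getLast hne) := by
    conv_lhs => rw [← List.dropLast_append_getLast hne]
    simp [wordRatio_append]
  have hdrop : t < wordRatio σ w.dropLast := hw.2 _ (List.dropLast_prefix w) fun h => by
    have := congrArg List.length h
    simp only [List.length_dropLast] at this
    exact hne (List.length_eq_zero_iff.1 (by omega))
  rw [hlast, mul_comm c]
  exact (mul_lt_mul_of_pos_right hdrop hc0).trans_le
    (mul_le_mul_of_nonneg_left (hc _) (ht0.trans hdrop.le))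

theorem stoppingWords_finite [Finite ι] {c s : ℝ} (hσ : ∀ i, 0 < σ i) (hc : ∀ i, c ≤ σ i)
    (hc0 : 0 < c) (hs : ∀ i, σ i ≤ s) (hs1 : s < 1) (ht0 : 0 < t) (ht1 : t < 1) :
    (stoppingWords σ t).Finite := by
  obtain ⟨n, hn⟩ := exists_pow_lt_of_lt_one (mul_pos hc0 ht0) hs1
  refine (List.finite_length_lt ι n).subset fun w hw => ?_
  by_contra! hlen
  replace hlen : n ≤ w.length := not_lt.1 hlen
  have hlt := mul_lt_wordRatio_of_mem_stoppingWords hc hc0 ht0.le ht1 hw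
  cases w with
  | nil => simp_all only [List.length_nil, nonpos_iff_eq_zero, pow_zero, wordRatio_nil]; linarith
  | cons i v =>
    have hs0 : 0 ≤ s := (hσ i).le.trans (hs i)
    have := (wordRatio_le_pow_length hσ hs _).trans (pow_le_pow_of_le_one hs0 hs1.le hlen)
    linarith

theorem disjoint_wordMap_image {f : ι → α → α} {U : Set α} (hinj : ∀ i, Injective (f i))
    (hfU : ∀ i, MapsTo (f i) U U) (hdisj : ∀ i j, i ≠ j → Disjoint (f i '' U) (f j '' U)) :
    ∀ w w' : List ι, ¬ w <+: w' → ¬ w' <+: w →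
      Disjoint (wordMap f w '' U) (wordMap f w' '' U)
  | [], _, h, _ | _, [], _, h => absurd List.nil_prefix h
  | i :: w, j :: w', h, h' => by
    rw [wordMap_cons, wordMap_cons, image_comp, image_comp]
    by_cases hij : i = j
    · subst hij
      rw [disjoint_image_iff (hinj i)]
      exact disjoint_wordMap_image hinj hfU hdisj w w' (by simpa using h) (by simpa using h')
    · exact (hdisj i j hij).mono (image_mono ((mapsTo_wordMap hfU w).image_subset))
        (image_mono ((mapsTo_wordMap hfU w').image_subset))

theorem exists_mem_stoppingWords_mem_image {f : ι → α → α} {F : Set α} {s : ℝ}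
    (hσ : ∀ i, 0 < σ i) (hs : ∀ i, σ i ≤ s) (hs1 : s < 1) (hFinv : F = ⋃ i, f i '' F)
    (ht : 0 < t) {x : α} (hx : x ∈ F) : ∃ w ∈ stoppingWords σ t, x ∈ wordMap f w '' F := by
  obtain ⟨n, hn⟩ := exists_pow_lt_of_lt_one ht hs1
  induction n generalizing t x with
  | zero => exact ⟨[], nil_mem_stoppingWords (by simpa using hn.le), by simpa using hx⟩
  | succ n ih =>
    rcases le_or_gt 1 t with ht1 | ht1
    · exact ⟨[], nil_mem_stoppingWords ht1, by simpa using hx⟩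
    obtain ⟨i, y, hy, rfl⟩ : ∃ i, ∃ y ∈ F, f i y = x := by
      rw [hFinv] at hx
      simpa using hx
    have hsn : s ^ n < t / σ i := by
      rw [lt_div_iff₀ (hσ i)]
      calc s ^ n * σ i ≤ s ^ n * s :=
            mul_le_mul_of_nonneg_left (hs i) (pow_nonneg ((hσ i).le.trans (hs i)) n)
        _ < t := pow_succ s n ▸ hn
    obtain ⟨w, hw, hxw⟩ := ih (div_pos ht (hσ i)) hy hsn
    refine ⟨i :: w, cons_mem_stoppingWords (hσ i) ht1 hw, ?_⟩
    rw [wordMap_cons, image_comp]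
    exact mem_image_of_mem _ hxw

end Words

section Metric

variable {ι X : Type*} [MetricSpace X] {σ : ι → ℝ}

theorem dist_wordMap {f : ι → X → X} (hsim : ∀ i x y, dist (f i x) (f i y) = σ i * dist x y) :
    ∀ (w : List ι) (x y : X), dist (wordMap f w x) (wordMap f w y) = wordRatio σ w * dist x y
  | [], x, y => by simp
  | i :: w, x, y => by simp [hsim, dist_wordMap hsim w, mul_assoc]

theorem coverNumber_le_coverNumber_closedBall_inter {f : ι → X → X} {F : Set X}
    {c s t r ε : ℝ} (hσ : ∀ i, 0 < σ i) (hsim : ∀ i x y, dist (f i x) (f i y) = σ i * dist x y)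
    (hc : ∀ i, c ≤ σ i) (hc0 : 0 < c) (hs : ∀ i, σ i ≤ s) (hs1 : s < 1)
    (hFinv : F = ⋃ i, f i '' F) (hFb : IsBounded F) (ht0 : 0 < t) (ht1 : t < 1) (hε : 0 ≤ ε)
    (hr : t * diam F ≤ r) {x : X} (hx : x ∈ F) :
    coverNumber F (2 * ε / (c * t)) ≤ coverNumber (closedBall x r ∩ F) ε := by
  obtain ⟨w, hw, u, hu, rfl⟩ := exists_mem_stoppingWords_mem_image hσ hs hs1 hFinv ht0 hx
  have hfF : ∀ i, MapsTo (f i) F F := fun i y hy => by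
    rw [hFinv]
    exact mem_iUnion_of_mem i (mem_image_of_mem (f i) hy)
  have hmaps : MapsTo (wordMap f w) F (closedBall (wordMap f w u) r ∩ F) := fun q hq => by
    refine ⟨?_, mapsTo_wordMap hfF w hq⟩
    rw [mem_closedBall, dist_wordMap hsim]
    exact (mul_le_mul hw.1 (dist_le_diam_of_mem hFb hq hu) dist_nonneg ht0.le).trans hr
  calc coverNumber F (2 * ε / (c * t)) ≤ coverNumber F (2 * ε / wordRatio σ w) :=
        coverNumber_antitone F <| div_le_div_of_nonneg_left (by positivity) (by positivity)
          (mul_lt_wordRatio_of_mem_stoppingWords hc hc0 ht0.le ht1 hw).le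
    _ ≤ coverNumber (closedBall (wordMap f w u) r ∩ F) ε :=
        coverNumber_le_of_mapsTo (wordRatio_pos hσ w) (fun a b => (dist_wordMap hsim w a b).ge)
          hmaps

theorem exists_coverNumber_le_coverNumber_closedBall_inter [Finite ι] [Nonempty ι]
    {f : ι → X → X} {F : Set X} (hσ : ∀ i, 0 < σ i ∧ σ i < 1)
    (hsim : ∀ i x y, dist (f i x) (f i y) = σ i * dist x y) (hFinv : F = ⋃ i, f i '' F)
    (hFb : IsBounded F) {δ₀ : ℝ} (hδ₀ : 0 < δ₀) :
    ∃ c₁ c₂ : ℝ, 0 < c₁ ∧ 0 < c₂ ∧ ∀ δ ρ : ℝ, 0 ≤ ρ → 0 < δ → δ ≤ δ₀ → ∀ x ∈ F,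
      coverNumber F (ρ / (2 * δ)) ≤ coverNumber (closedBall x (c₁ * δ) ∩ F) (c₂ * ρ) := by
  obtain ⟨i, hmin⟩ := Finite.exists_min σ
  obtain ⟨j, hmax⟩ := Finite.exists_max σ
  have hσi : 0 < σ i := (hσ i).1
  refine ⟨diam F + 1, σ i / (4 * (δ₀ + 1)), by positivity, by positivity,
    fun δ ρ hρ hδ hδδ₀ x hx => ?_⟩
  have htδ : δ / (δ₀ + 1) ≤ δ := div_le_self hδ.le (by linarith)
  -- at scale `t = δ / (δ₀ + 1)`, `c₂` is chosen so that `2 c₂ ρ / (σ i * t) = ρ / (2 δ)`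
  convert coverNumber_le_coverNumber_closedBall_inter (t := δ / (δ₀ + 1))
    (ε := σ i / (4 * (δ₀ + 1)) * ρ) (fun i => (hσ i).1) hsim hmin hσi hmax (hσ j).2 hFinv hFb
    (by positivity) ((div_lt_one (by positivity)).2 (by linarith)) (by positivity) ?_ hx using 2
  · field_simp
    norm_num
  · nlinarith [diam_nonneg (s := F)]

end Metric

section FiniteDimensional

variable {ι E : Type*} [NormedAddCommGroup E] [NormedSpace ℝ E] [StrictConvexSpace ℝ E]
  [FiniteDimensional ℝ E] {f : ι → E → E} {σ : ι → ℝ}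

theorem card_le_of_subset_stoppingWords {U : Set E} {c t r₀ R : ℝ} {p y : E}
    {T : Finset (List ι)} (hσ : ∀ i, 0 < σ i)
    (hsim : ∀ i x y, dist (f i x) (f i y) = σ i * dist x y) (hc : ∀ i, c ≤ σ i) (hc0 : 0 < c)
    (hfU : ∀ i, MapsTo (f i) U U) (hdisj : ∀ i j, i ≠ j → Disjoint (f i '' U) (f j '' U))
    (ht0 : 0 < t) (ht1 : t < 1) (hr₀ : 0 < r₀) (hball : ball p r₀ ⊆ U)
    (hT : ↑T ⊆ stoppingWords σ t) (hTR : ∀ w ∈ T, wordMap f w '' U ⊆ closedBall y R) :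
    (T.card : ℝ≥0∞) ≤ ENNReal.ofReal ((R / (c * t * r₀)) ^ finrank ℝ E) := by
  have hinj : ∀ i, Injective (f i) := fun i => injective_of_dist_eq_mul (hσ i) (hsim i)
  have hballU : ∀ w ∈ T, ball (wordMap f w p) (c * t * r₀) ⊆ wordMap f w '' U := fun w hw =>
    calc ball (wordMap f w p) (c * t * r₀) ⊆ ball (wordMap f w p) (wordRatio σ w * r₀) :=
          ball_subset_ball (mul_le_mul_of_nonneg_right
            (mul_lt_wordRatio_of_mem_stoppingWords hc hc0 ht0.le ht1 (hT hw)).le hr₀.le)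
      _ ⊆ wordMap f w '' ball p r₀ :=
          ball_mul_subset_image_ball (wordRatio_pos hσ w) (dist_wordMap hsim w)
            (surjective_of_dist_eq_mul (wordRatio_pos hσ w) (dist_wordMap hsim w)) p r₀
      _ ⊆ wordMap f w '' U := image_mono hball
  refine card_le_of_pairwiseDisjoint_ball_subset_closedBall (by positivity) ?_
    fun w hw => (hballU w hw).trans (hTR w hw)
  intro w hw w' hw' hne
  exact (disjoint_wordMap_image hinj hfU hdisj w w'
    (not_prefix_of_mem_stoppingWords (hT hw) (hT hw') hne)
    (not_prefix_of_mem_stoppingWords (hT hw') (hT hw) hne.symm)).mono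
    (hballU w hw) (hballU w' hw')

theorem coverNumber_closedBall_inter_le [Finite ι] {F U : Set E} {c s t r₀ δ ε : ℝ} {p : E}
    (hσ : ∀ i, 0 < σ i) (hsim : ∀ i x y, dist (f i x) (f i y) = σ i * dist x y)
    (hc : ∀ i, c ≤ σ i) (hc0 : 0 < c) (hs : ∀ i, σ i ≤ s) (hs1 : s < 1)
    (hFinv : F = ⋃ i, f i '' F) (hFc : TotallyBounded F) (hUb : IsBounded U)
    (hFU : F ⊆ closure U) (hfU : ∀ i, MapsTo (f i) U U)
    (hdisj : ∀ i j, i ≠ j → Disjoint (f i '' U) (f j '' U)) (hr₀ : 0 < r₀)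
    (hball : ball p r₀ ⊆ U) (ht0 : 0 < t) (ht1 : t < 1) (htδ : t ≤ δ) (hε : 0 < ε) (y : E) :
    coverNumber (closedBall y δ ∩ F) (2 * (δ * ε)) ≤
      ENNReal.ofReal (((t * diam U + δ) / (c * t * r₀)) ^ finrank ℝ E) * coverNumber F ε := by
  classical
  have hfin := stoppingWords_finite hσ hc hc0 hs hs1 ht0 ht1
  let S := hfin.toFinset.filter fun w => (wordMap f w '' F ∩ closedBall y δ).Nonempty
  have hS : ∀ w ∈ S, w ∈ stoppingWords σ t := fun w hw =>
    hfin.mem_toFinset.1 (Finset.mem_filter.1 hw).1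
  have hcover : closedBall y δ ∩ F ⊆ ⋃ w ∈ S, wordMap f w '' F := by
    rintro x ⟨hxy, hx⟩
    obtain ⟨w, hw, hxw⟩ := exists_mem_stoppingWords_mem_image hσ hs hs1 hFinv ht0 hx
    exact mem_iUnion₂.2 ⟨w, Finset.mem_filter.2 ⟨hfin.mem_toFinset.2 hw, x, hxw, hxy⟩, hxw⟩
  have hSR : ∀ w ∈ S, wordMap f w '' U ⊆ closedBall y (t * diam U + δ) := by
    intro w hw
    obtain ⟨-, _, ⟨q, hq, rfl⟩, hqy⟩ := Finset.mem_filter.1 hw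
    rintro _ ⟨z, hz, rfl⟩
    have hzq : dist z q ≤ diam U := by
      rw [← diam_closure]
      exact dist_le_diam_of_mem hUb.closure (subset_closure hz) (hFU hq)
    calc dist (wordMap f w z) y
        ≤ dist (wordMap f w z) (wordMap f w q) + dist (wordMap f w q) y := dist_triangle _ _ _
      _ ≤ t * diam U + δ := by
          rw [dist_wordMap hsim]
          exact add_le_add (mul_le_mul (hS w hw).1 hzq dist_nonneg ht0.le) hqy
  have hcard := card_le_of_subset_stoppingWords hσ hsim hc hc0 hfU hdisj ht0 ht1 hr₀ hball
    (T := S) hS hSR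
  calc coverNumber (closedBall y δ ∩ F) (2 * (δ * ε)) ≤ S.card * coverNumber F ε :=
        coverNumber_le_card_mul_of_subset_biUnion_image hFc (ht0.le.trans htδ) hε S (wordMap f)
          (fun w hw a b => (dist_wordMap hsim w a b).le.trans
            (mul_le_mul_of_nonneg_right ((hS w hw).1.trans htδ) dist_nonneg)) hcover
    _ ≤ _ := mul_le_mul_left hcard _

theorem exists_coverNumber_closedBall_inter_le [Finite ι] [Nonempty ι] {F U : Set E}
    (hσ : ∀ i, 0 < σ i ∧ σ i < 1) (hsim : ∀ i x y, dist (f i x) (f i y) = σ i * dist x y)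
    (hFinv : F = ⋃ i, f i '' F) (hFc : TotallyBounded F) (hUne : U.Nonempty) (hUo : IsOpen U)
    (hUb : IsBounded U) (hFU : F ⊆ closure U) (hfU : ∀ i, MapsTo (f i) U U)
    (hdisj : ∀ i j, i ≠ j → Disjoint (f i '' U) (f j '' U)) {δ₀ : ℝ} (hδ₀ : 0 < δ₀) :
    ∃ M : ℝ, 1 ≤ M ∧ ∀ δ ρ : ℝ, 0 < ρ → 0 < δ → δ ≤ δ₀ → ∀ y,
      coverNumber (closedBall y δ ∩ F) ρ ≤ ENNReal.ofReal M * coverNumber F (ρ / (2 * δ)) := by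
  obtain ⟨i, hmin⟩ := Finite.exists_min σ
  obtain ⟨j, hmax⟩ := Finite.exists_max σ
  have hσi : 0 < σ i := (hσ i).1
  obtain ⟨p, hp⟩ := hUne
  obtain ⟨r₀, hr₀, hball⟩ := Metric.isOpen_iff.1 hUo p hp
  refine ⟨max 1 (((diam U + (δ₀ + 1)) / (σ i * r₀)) ^ finrank ℝ E), le_max_left _ _,
    fun δ ρ hρ hδ hδδ₀ y => ?_⟩
  -- at scale `t = δ / (δ₀ + 1)` the volume ratio below no longer depends on `δ`
  have h := coverNumber_closedBall_inter_le (t := δ / (δ₀ + 1)) (ε := ρ / (2 * δ))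
    (fun i => (hσ i).1) hsim hmin hσi hmax (hσ j).2 hFinv hFc hUb hFU hfU hdisj hr₀ hball
    (by positivity) ((div_lt_one (by positivity)).2 (by linarith))
    (div_le_self hδ.le (by linarith)) (by positivity) y
  rw [show 2 * (δ * (ρ / (2 * δ))) = ρ by field_simp,
    show (δ / (δ₀ + 1) * diam U + δ) / (σ i * (δ / (δ₀ + 1)) * r₀) =
      (diam U + (δ₀ + 1)) / (σ i * r₀) by field_simp] at h
  exact h.trans (mul_le_mul_left (ENNReal.ofReal_le_ofReal (le_max_right _ _)) _)

end FiniteDimensional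

theorem selfSimilar_equiHomogeneous_general {d : ℕ} {ι : Type*} [Fintype ι] [Nonempty ι]
    (f : ι → EuclideanSpace ℝ (Fin d) → EuclideanSpace ℝ (Fin d))
    (σ : ι → ℝ) (hσ : ∀ i, 0 < σ i ∧ σ i < 1)
    (hsim : ∀ i x y, dist (f i x) (f i y) = σ i * dist x y)
    (F : Set (EuclideanSpace ℝ (Fin d)))
    (hFc : IsCompact F)
    (hFinv : F = ⋃ i, f i '' F)
    (U : Set (EuclideanSpace ℝ (Fin d)))
    (hUne : U.Nonempty) (hUo : IsOpen U) (hUb : IsBounded U)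
    (hFU : F ⊆ closure U)
    (hfU : ∀ i, f i '' U ⊆ U)
    (hdisj : ∀ i j, i ≠ j → f i '' U ∩ f j '' U = ∅) :
    EquiHomogeneous F := by
  intro δ₀ hδ₀
  obtain ⟨c₁, c₂, hc₁, hc₂, hlow⟩ :=
    exists_coverNumber_le_coverNumber_closedBall_inter hσ hsim hFinv hFc.isBounded hδ₀
  obtain ⟨M, hM, hup⟩ := exists_coverNumber_closedBall_inter_le hσ hsim hFinv
    hFc.totallyBounded hUne hUo hUb hFU (fun i => mapsTo_iff_image_subset.2 (hfU i))
    (fun i j hij => disjoint_iff_inter_eq_empty.2 (hdisj i j hij)) hδ₀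
  refine ⟨M, c₁, c₂, hM, hc₁, hc₂, fun δ ρ hρ hρδ hδδ₀ => ?_⟩
  have hδ : 0 < δ := hρ.trans hρδ
  exact iSup₂_le fun y _ => (hup δ ρ hρ hδ hδδ₀ y).trans
    (mul_le_mul_right (le_iInf₂ fun x hx => hlow δ ρ hρ.le hδ hδδ₀ x hx) _)

/-- The attractor of an autonomous iterated function system of
contracting similarities satisfying the Moran open-set condition is
equi-homogeneous. -/
theorem selfSimilar_equiHomogeneous {d : ℕ} {ι : Type*} [Fintype ι] [Nonempty ι]
    (f : ι → EuclideanSpace ℝ (Fin d) → EuclideanSpace ℝ (Fin d))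
    (σ : ι → ℝ) (hσ : ∀ i, 0 < σ i ∧ σ i < 1)
    (hsim : ∀ i x y, dist (f i x) (f i y) = σ i * dist x y)
    (F : Set (EuclideanSpace ℝ (Fin d)))
    (hFc : IsCompact F) (hFne : F.Nonempty)
    (hFinv : F = ⋃ i, f i '' F)
    (U : Set (EuclideanSpace ℝ (Fin d)))
    (hUne : U.Nonempty) (hUo : IsOpen U) (hUb : IsBounded U)
    (hFU : F ⊆ closure U)
    (hfU : ∀ i, f i '' U ⊆ U)
    (hdisj : ∀ i j, i ≠ j → f i '' U ∩ f j '' U = ∅) :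
    EquiHomogeneous F :=
  selfSimilar_equiHomogeneous_general f σ hσ hsim F hFc hFinv U hUne hUo hUb hFU hfU hdisj
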